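/- Let λ be the uniform (normalized Lebesgue) probability measure on the interval [0, 2π] and for w ∈ ℝ let C_w = {x ∈ ℝ : cos(wx) ≥ 0}. Then for all integers 0 ≤ j < k, λ(C_{2^j} Δ C_{2^k}) = 1/2. In particular, the concepts C_{2^k}, k = 0, 1, 2, …, form an infinite family whose members are pairwise at L¹(λ)-distance exactly 1/2. -/

import Mathlib

open MeasureTheory

/-- The uniform (normalized Lebesgue) probability measure on `[0, 2π]`. -/
noncomputable def unifTwoPi : Measure ℝ :=
  (ENNReal.ofReal (2 * Real.pi))⁻¹ • (volume.restrict (Set.Icc (0 : ℝ) (2 * Real.pi)))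

open Real Set

/-!
Let `S = C_{2^j} Δ C_{2^k}` and `t = π / 2^j`. Translation by `t` negates `cos (2^j x)` and, as
`j < k` makes `2^k t` a multiple of `2π`, fixes `cos (2^k x)`; so off the null set of zeros of
`cos (2^j x)` it exchanges `S` with its complement. Since `S` is `2π`-periodic, translating does
not change how much of a period it fills, so `S` and its complement each fill half of `[0, 2π]`.
-/

def cosNonnegSet (w : ℝ) : Set ℝ := {x | 0 ≤ cos (w * x)}

theorem measurableSet_cosNonnegSet (w : ℝ) : MeasurableSet (cosNonnegSet w) :=
  (isClosed_le continuous_const (by fun_prop)).measurableSet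

theorem add_mem_cosNonnegSet_iff {w T : ℝ} (n : ℤ) (h : w * T = n * (2 * π)) (x : ℝ) :
    x + T ∈ cosNonnegSet w ↔ x ∈ cosNonnegSet w := by
  simp only [cosNonnegSet, mem_ofPred_eq, mul_add, h, cos_add_int_mul_two_pi]

theorem countable_setOf_cos_mul_eq_zero {w : ℝ} (hw : w ≠ 0) :
    {x | cos (w * x) = 0}.Countable := by
  have hzeros : {θ | cos θ = 0} ⊆ range (fun k : ℤ => (2 * k + 1) * π / 2) := fun θ hθ =>
    (cos_eq_zero_iff.mp hθ).imp fun _ hk => hk.symm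
  exact ((countable_range _).mono hzeros).preimage (mul_right_injective₀ hw)

theorem ae_add_mem_cosNonnegSet_iff_notMem {w t : ℝ} (hw : w ≠ 0) (h : w * t = π) :
    ∀ᵐ x, x + t ∈ cosNonnegSet w ↔ x ∉ cosNonnegSet w := by
  filter_upwards [measure_eq_zero_iff_ae_notMem.mp
    ((countable_setOf_cos_mul_eq_zero hw).measure_zero volume)] with x hx
  have hx : cos (w * x) ≠ 0 := hx
  simp only [cosNonnegSet, mem_ofPred_eq, mul_add, h, cos_add_pi, neg_nonneg, not_le]
  exact ⟨fun h => h.lt_of_ne hx, le_of_lt⟩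

theorem volume_real_inter_Ioc_eq_half_of_periodic_of_ae_flip {S : Set ℝ} {T : ℝ}
    (hS : MeasurableSet S) (hT : 0 ≤ T) (hper : ∀ x, x + T ∈ S ↔ x ∈ S) (t : ℝ)
    (hflip : ∀ᵐ x, x + t ∈ S ↔ x ∉ S) :
    volume.real (S ∩ Ioc 0 T) = T / 2 := by
  set f : ℝ → ℝ := S.indicator 1
  have hf : Function.Periodic f T := fun x => by
    by_cases h : x ∈ S <;> simp [f, h, hper]
  have hfi : IntervalIntegrable f volume 0 T :=
    (intervalIntegrable_iff_integrableOn_Ioc_of_le hT).2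
      ((integrableOn_const (C := (1 : ℝ)) measure_Ioc_lt_top.ne).indicator hS)
  have hI : ∫ x in 0..T, f x = T - ∫ x in 0..T, f x := calc
    ∫ x in 0..T, f x = ∫ x in t..t + T, f x := by simpa using hf.intervalIntegral_add_eq 0 t
    _ = ∫ x in 0..T, f (x + t) := by
      rw [intervalIntegral.integral_comp_add_right, zero_add, add_comm]
    _ = ∫ x in 0..T, (1 - f x) := intervalIntegral.integral_congr_ae <| by
      filter_upwards [hflip] with x hx _
      by_cases h : x ∈ S <;> simp [f, h, hx]
    _ = T - ∫ x in 0..T, f x := by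
      rw [intervalIntegral.integral_sub intervalIntegrable_const hfi]; simp
  have hvol : ∫ x in 0..T, f x = volume.real (S ∩ Ioc 0 T) := by
    rw [intervalIntegral.integral_of_le hT, integral_indicator_one hS,
      measureReal_restrict_apply hS]
  linarith

theorem unifTwoPi_eq_half_of_periodic_of_ae_flip {S : Set ℝ} (hS : MeasurableSet S)
    (hper : ∀ x, x + 2 * π ∈ S ↔ x ∈ S) (t : ℝ) (hflip : ∀ᵐ x, x + t ∈ S ↔ x ∉ S) :
    unifTwoPi S = 1 / 2 := by
  have hπ : 0 < 2 * π := by positivity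
  rw [unifTwoPi, Measure.smul_apply, ← Measure.restrict_congr_set Ioc_ae_eq_Icc,
    Measure.restrict_apply hS,
    ← ofReal_measureReal ((measure_mono inter_subset_right).trans_lt measure_Ioc_lt_top).ne,
    volume_real_inter_Ioc_eq_half_of_periodic_of_ae_flip hS hπ.le hper t hflip, smul_eq_mul,
    ← ENNReal.ofReal_inv_of_pos hπ, ← ENNReal.ofReal_mul (by positivity)]
  have : (2 * π)⁻¹ * (2 * π / 2) = 1 / 2 := by field_simp
  rw [this, ENNReal.ofReal_div_of_pos two_pos]
  simp

theorem stmt9 (j k : ℕ) (hjk : j < k) :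
    unifTwoPi (symmDiff {x : ℝ | 0 ≤ Real.cos ((2 : ℝ) ^ j * x)}
      {x : ℝ | 0 ≤ Real.cos ((2 : ℝ) ^ k * x)}) = 1 / 2 := by
  have hper (i : ℕ) (x : ℝ) : x + 2 * π ∈ cosNonnegSet (2 ^ i) ↔ x ∈ cosNonnegSet (2 ^ i) :=
    add_mem_cosNonnegSet_iff (2 ^ i) (by push_cast; ring) x
  have hj : (2 : ℝ) ^ j * (π / 2 ^ j) = π := by field_simp
  have hk : (2 : ℝ) ^ k * (π / 2 ^ j) = ((2 ^ (k - j - 1) : ℕ) : ℤ) * (2 * π) := by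
    rw [show k = (k - j - 1) + 1 + j by omega, Nat.add_sub_cancel, Nat.add_sub_cancel]
    push_cast
    field_simp
    ring
  change unifTwoPi (symmDiff (cosNonnegSet (2 ^ j)) (cosNonnegSet (2 ^ k))) = 1 / 2
  refine unifTwoPi_eq_half_of_periodic_of_ae_flip
    ((measurableSet_cosNonnegSet _).symmDiff (measurableSet_cosNonnegSet _))
    (fun x => by simp only [mem_symmDiff, hper]) (π / 2 ^ j) ?_
  filter_upwards [ae_add_mem_cosNonnegSet_iff_notMem (by positivity) hj] with x hx
  simp only [mem_symmDiff, hx, add_mem_cosNonnegSet_iff _ hk]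
  tauto
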